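/- arXiv:1903.09619 — 2 statements merged into one kernel-verified Lean document; each statement's English description precedes it below -/
import Mathlib

section
/- For all natural numbers n ≥ 1 and k ≥ 0, if n ≤ 2^k then H(n) ≤ k. -/
/-!
After the first step every term of the chain `n, φ n, φ (φ n), …` is even (`φ m` is even for
`m > 2`), and `φ m ≤ m / 2` for even `m`. So the chain halves at each step from the second on,
which gives `2 ^ H n < 2 * n`.
-/

/-- The height function: H(1) = 0 and H(n) = H(φ(n)) + 1 for n ≥ 2. -/
def H : ℕ → ℕ
  | 0 => 0
  | 1 => 0
  | n + 2 => H (Nat.totient (n + 2)) + 1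
  decreasing_by exact Nat.totient_lt _ (by omega)

/-- The sum-of-heights function S(n) = ∑_{k=1}^n H(k). -/
def S (n : ℕ) : ℕ := ∑ k ∈ Finset.Icc 1 n, H k

namespace Nat

theorem totient_two_mul_le (j : ℕ) : φ (2 * j) ≤ j := by
  induction j using Nat.strong_induction_on with
  | _ j ih =>
    obtain ⟨i, rfl | rfl⟩ := j.even_or_odd'
    · rcases i.eq_zero_or_pos with rfl | hi
      · simp
      rw [totient_two_mul_of_even (even_two_mul i)]
      have := ih i (by omega)
      omega
    · rw [totient_two_mul_of_odd (odd_two_mul_add_one i)]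
      exact totient_le _

theorem two_mul_totient_le_of_even {m : ℕ} (hm : Even m) : 2 * φ m ≤ m := by
  obtain ⟨j, rfl⟩ := hm.two_dvd
  have := totient_two_mul_le j
  omega

end Nat

theorem H_one : H 1 = 0 := by
  simp [H]

theorem H_eq_H_totient_add_one {n : ℕ} (hn : 2 ≤ n) : H n = H n.totient + 1 := by
  obtain ⟨m, rfl⟩ : ∃ m, n = m + 2 := ⟨n - 2, by omega⟩
  rw [H]

theorem H_two : H 2 = 1 := by
  rw [H_eq_H_totient_add_one le_rfl, Nat.totient_two, H_one]

theorem two_pow_H_le_of_even {m : ℕ} (hm : Even m) (hm0 : 0 < m) : 2 ^ H m ≤ m := by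
  induction m using Nat.strong_induction_on with
  | _ m ih =>
    obtain rfl | hm2 : m = 2 ∨ 2 < m := by
      obtain ⟨j, rfl⟩ := hm
      omega
    · simp [H_two]
    have hφ : 2 ^ H m.totient ≤ m.totient :=
      ih _ (Nat.totient_lt m (by omega)) (Nat.totient_even hm2) (Nat.totient_pos.2 hm0)
    calc 2 ^ H m = 2 * 2 ^ H m.totient := by rw [H_eq_H_totient_add_one hm2.le, pow_succ']
      _ ≤ 2 * m.totient := by omega
      _ ≤ m := Nat.two_mul_totient_le_of_even hm

theorem two_pow_H_lt {n : ℕ} (hn : 0 < n) : 2 ^ H n < 2 * n := by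
  obtain rfl | rfl | hn2 : n = 1 ∨ n = 2 ∨ 2 < n := by omega
  · simp [H_one]
  · simp [H_two]
  have hφ : 2 ^ H n.totient ≤ n.totient :=
    two_pow_H_le_of_even (Nat.totient_even hn2) (Nat.totient_pos.2 hn)
  calc 2 ^ H n = 2 * 2 ^ H n.totient := by rw [H_eq_H_totient_add_one hn2.le, pow_succ']
    _ ≤ 2 * n.totient := by omega
    _ < 2 * n := by have := Nat.totient_lt n (by omega); omega

theorem height_le_of_le_pow (n k : ℕ) (hn : 1 ≤ n) (h : n ≤ 2 ^ k) :
    H n ≤ k := by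
  have hlt : 2 ^ H n < 2 ^ (k + 1) :=
    calc 2 ^ H n < 2 * n := two_pow_H_lt hn
      _ ≤ 2 ^ (k + 1) := by rw [pow_succ']; omega
  exact Nat.lt_succ_iff.1 ((Nat.pow_lt_pow_iff_right one_lt_two).1 hlt)
end

section
/- For every h ≥ 1, the largest even number at height h is 2·3^{h−1}: H(2·3^{h−1}) = h, and every even natural number n with H(n) = h satisfies n ≤ 2·3^{h−1}. -/
def shapiroWeight : ℕ → ℕ
  | 0 => 0
  | 1 => 0
  | n + 2 =>
    shapiroWeight ((n + 2) / (n + 2).minFac) +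
      if (n + 2).minFac = 2 then 1 else shapiroWeight ((n + 2).minFac - 1)
decreasing_by
  · exact Nat.div_lt_self (by omega) (Nat.minFac_prime (by omega)).one_lt
  · have := Nat.minFac_le (n := n + 2) (by omega); omega

section

open scoped Nat

local notation "W" => shapiroWeight

theorem shapiroWeight_of_two_le {n : ℕ} (hn : 2 ≤ n) :
    W n = W (n / n.minFac) + if n.minFac = 2 then 1 else W (n.minFac - 1) := by
  obtain ⟨m, rfl⟩ : ∃ m, n = m + 2 := ⟨n - 2, by omega⟩
  rw [shapiroWeight]

@[simp] theorem shapiroWeight_one : W 1 = 0 := by rw [shapiroWeight]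

theorem shapiroWeight_prime {p : ℕ} (hp : p.Prime) :
    W p = if p = 2 then 1 else W (p - 1) := by
  rw [shapiroWeight_of_two_le hp.two_le, hp.minFac_eq, Nat.div_self hp.pos, shapiroWeight_one,
    zero_add]

@[simp] theorem shapiroWeight_two : W 2 = 1 := by simp [shapiroWeight_prime Nat.prime_two]

theorem shapiroWeight_eq_div_minFac_add {n : ℕ} (hn : 2 ≤ n) :
    W n = W (n / n.minFac) + W n.minFac := by
  rw [shapiroWeight_of_two_le hn, shapiroWeight_prime (Nat.minFac_prime (by omega))]

theorem shapiroWeight_prime_mul {p m : ℕ} (hp : p.Prime) (hm : 0 < m) :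
    W (p * m) = W p + W m := by
  induction m using Nat.strong_induction_on generalizing p with
  | _ m ih =>
  have hpm : 2 ≤ p * m := le_mul_of_le_of_one_le hp.two_le hm
  obtain ⟨q, hq_def⟩ : ∃ q, q = (p * m).minFac := ⟨_, rfl⟩
  have hq : q.Prime := hq_def ▸ Nat.minFac_prime (by omega)
  rw [shapiroWeight_eq_div_minFac_add hpm, ← hq_def]
  rcases (Nat.Prime.dvd_mul hq).1 (hq_def ▸ Nat.minFac_dvd (p * m)) with hqp | ⟨k, rfl⟩
  · rw [(Nat.prime_dvd_prime_iff_eq hq hp).1 hqp, Nat.mul_div_cancel_left m hp.pos, add_comm]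
  · -- peel `q` off both `p * (q * k)` and `q * k`, using the induction hypothesis at `k`
    have hk : 0 < k := Nat.pos_of_mul_pos_left hm
    have hkm : k < q * k := lt_mul_left hk hq.one_lt
    rw [mul_left_comm, Nat.mul_div_cancel_left _ hq.pos, ih k hkm hp hk, ih k hkm hq hk]
    ring

theorem shapiroWeight_mul {a b : ℕ} (ha : 0 < a) (hb : 0 < b) : W (a * b) = W a + W b := by
  induction a using induction_on_primes generalizing b with
  | zero => omega
  | one => simp
  | prime_mul p a hp ih =>
    have ha' : 0 < a := Nat.pos_of_mul_pos_left ha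
    rw [mul_assoc, shapiroWeight_prime_mul hp (by positivity), ih ha' hb,
      shapiroWeight_prime_mul hp ha', add_assoc]

theorem shapiroWeight_pow {a : ℕ} (ha : 0 < a) (k : ℕ) : W (a ^ k) = k * W a := by
  induction k with
  | zero => simp
  | succ k ih => rw [pow_succ, shapiroWeight_mul (by positivity) ha, ih, add_one_mul]

theorem shapiroWeight_sub_one_add_of_prime {p : ℕ} (hp : p.Prime) :
    W (p - 1) + (if p = 2 then 1 else 0) = W p := by
  rw [shapiroWeight_prime hp]
  split_ifs with h <;> simp [h]

theorem shapiroWeight_totient_add {n : ℕ} (hn : 0 < n) :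
    W (φ n) + (if Even n then 1 else 0) = W n := by
  induction n using Nat.recOnPosPrimePosCoprime with
  | zero => omega
  | one => simp
  | prime_pow p k hp hk =>
    obtain ⟨k, rfl⟩ : ∃ j, k = j + 1 := ⟨k - 1, by omega⟩
    have hp1 : 0 < p - 1 := by have := hp.two_le; omega
    have heven : Even (p ^ (k + 1)) ↔ p = 2 := by
      rw [Nat.even_pow' k.succ_ne_zero, hp.even_iff]
    rw [Nat.totient_prime_pow_succ hp, shapiroWeight_mul (pow_pos hp.pos _) hp1,
      shapiroWeight_pow hp.pos, shapiroWeight_pow hp.pos, if_congr heven rfl rfl, add_assoc,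
      shapiroWeight_sub_one_add_of_prime hp, add_one_mul]
  | coprime a b ha hb hab iha ihb =>
    have hodd : ¬ (Even a ∧ Even b) := fun ⟨ea, eb⟩ => by
      simpa [Nat.Coprime.gcd_eq_one hab] using Nat.dvd_gcd ea.two_dvd eb.two_dvd
    rw [Nat.totient_mul hab,
      shapiroWeight_mul (Nat.totient_pos.2 (by omega)) (Nat.totient_pos.2 (by omega)),
      shapiroWeight_mul (by omega) (by omega), ← iha (by omega), ← ihb (by omega)]
    simp only [Nat.even_mul]
    split_ifs <;> first | omega | tauto

theorem le_three_pow_shapiroWeight {n : ℕ} (hn : 0 < n) : n ≤ 3 ^ W n := by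
  induction n using Nat.strong_induction_on with
  | _ n ih =>
  rcases (Nat.succ_le_of_lt hn).eq_or_lt with rfl | hn1
  · simp
  set p := n.minFac
  have hp : p.Prime := Nat.minFac_prime (by omega)
  obtain ⟨m, hm⟩ := Nat.minFac_dvd n
  have hm0 : 0 < m := Nat.pos_of_mul_pos_left (hm ▸ hn)
  have hp_le : p ≤ 3 ^ W p := by
    rcases hp.eq_two_or_odd' with h2 | ⟨k, hk⟩
    · rw [h2, shapiroWeight_two]; norm_num
    · have hk0 : 0 < k := by have := hp.two_le; omega
      have hkn : k < n := by have := Nat.minFac_le hn; omega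
      rw [shapiroWeight_prime hp, if_neg (by omega), hk, add_tsub_cancel_right,
        shapiroWeight_mul (by norm_num) hk0, shapiroWeight_two, pow_add]
      have := ih k hkn hk0
      omega
  have hm_le : m ≤ 3 ^ W m := ih m (hm ▸ lt_mul_left hm0 hp.one_lt) hm0
  calc n = p * m := hm
    _ ≤ 3 ^ W p * 3 ^ W m := Nat.mul_le_mul hp_le hm_le
    _ = 3 ^ W n := by rw [← pow_add, ← shapiroWeight_mul hp.pos hm0, ← hm]

theorem le_two_mul_three_pow_shapiroWeight_of_even {n : ℕ} (hn : Even n) (hn0 : 0 < n) :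
    n ≤ 2 * 3 ^ (W n - 1) := by
  obtain ⟨m, rfl⟩ := hn.two_dvd
  have hm : 0 < m := by omega
  rw [shapiroWeight_mul (by norm_num) hm, shapiroWeight_two, add_tsub_cancel_left]
  exact Nat.mul_le_mul_left 2 (le_three_pow_shapiroWeight hm)

theorem shapiroWeight_two_mul_three_pow (k : ℕ) : W (2 * 3 ^ k) = k + 1 := by
  have h3 : W 3 = 1 := by rw [shapiroWeight_prime Nat.prime_three]; simp
  rw [shapiroWeight_mul (by norm_num) (by positivity), shapiroWeight_pow (by norm_num),
    shapiroWeight_two, h3]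
  ring

theorem H_of_two_le {n : ℕ} (hn : 2 ≤ n) : H n = H (φ n) + 1 := by
  obtain ⟨m, rfl⟩ : ∃ m, n = m + 2 := ⟨n - 2, by omega⟩
  rw [H]

theorem H_eq_shapiroWeight_of_even {n : ℕ} (hn : Even n) (hn0 : 0 < n) :
    H n = W n := by
  induction n using Nat.strong_induction_on with
  | _ n ih =>
  have h2 : 2 ≤ n := by obtain ⟨k, rfl⟩ := hn; omega
  rw [H_of_two_le h2, ← shapiroWeight_totient_add hn0, if_pos hn]
  rcases h2.eq_or_lt with rfl | h2
  · simp [H]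
  · rw [ih _ (Nat.totient_lt n (by omega)) (Nat.totient_even h2) (Nat.totient_pos.2 hn0)]

end

theorem largest_even_at_height (h : ℕ) (hh : 1 ≤ h) :
    H (2 * 3 ^ (h - 1)) = h ∧
    ∀ n : ℕ, Even n → H n = h → n ≤ 2 * 3 ^ (h - 1) := by
  obtain ⟨k, rfl⟩ : ∃ k, h = k + 1 := ⟨h - 1, by omega⟩
  rw [add_tsub_cancel_right]
  refine ⟨?_, fun n hn hH => ?_⟩
  · rw [H_eq_shapiroWeight_of_even (even_two_mul _) (by positivity),
      shapiroWeight_two_mul_three_pow]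
  · rcases n.eq_zero_or_pos with rfl | hn0
    · positivity
    · rw [H_eq_shapiroWeight_of_even hn hn0] at hH
      simpa [hH] using le_two_mul_three_pow_shapiroWeight_of_even hn hn0
end
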